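/- arXiv:1204.3807 — 2 statements merged into one kernel-verified Lean document; each statement's English description precedes it below -/
import Mathlib

section
/- Let δ > 0, s₀ ∈ ℂ with s₀ ≠ 0, and let f : [0,∞) → ℂ be continuously differentiable with |f(ξ)| ≤ C e^{−δξ} and |f′(ξ)| ≤ C e^{−δξ} for all ξ ≥ 0 and some constant C. For z in the open unit disc with z ≠ 1 and Re(s₀(z+1)/(z−1)) > −δ, define (𝓜𝓛f)(z) = (Lf)(s₀(z+1)/(z−1))/(z−1), where (Lg)(s) = ∫₀^∞ e^{−sξ} g(ξ) dξ, and define F(z) = (2s₀·(𝓜𝓛f)(z) − f(0))/(z−1), so that (𝓜𝓛f)(z) = (1/(2s₀))·(f(0) + (z−1)F(z)). Then (𝓜𝓛(f′))(z) = (1/2)·(f(0) + (z+1)·F(z)) for all such z. -/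
/-!
Integrating by parts against `exp(−sξ)` gives `L(f′)(s) = s (Lf)(s) − f(0)` for `Re s > −δ`, the
boundary term at infinity vanishing by the exponential bound on `f`. With
`s = s₀(z+1)/(z−1)` the claimed identity is then an algebraic identity in `z`.
-/

open Complex MeasureTheory Set Filter Topology

noncomputable def laplaceTransform (g : ℝ → ℂ) (s : ℂ) : ℂ :=
  ∫ ξ in Ioi (0 : ℝ), cexp (-s * ξ) * g ξ

lemma norm_cexp_neg_mul_ofReal (s : ℂ) (ξ : ℝ) : ‖cexp (-s * ξ)‖ = Real.exp (-s.re * ξ) := by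
  simp [Complex.norm_exp]

section ExponentialBound

variable {g : ℝ → ℂ} {C δ : ℝ} {s : ℂ}

lemma norm_cexp_neg_mul_le_of_exp_bound
    (hg : ∀ ξ : ℝ, 0 ≤ ξ → ‖g ξ‖ ≤ C * Real.exp (-δ * ξ)) {ξ : ℝ} (hξ : 0 ≤ ξ) :
    ‖cexp (-s * ξ) * g ξ‖ ≤ C * Real.exp (-(s.re + δ) * ξ) :=
  calc ‖cexp (-s * ξ) * g ξ‖ ≤ Real.exp (-s.re * ξ) * (C * Real.exp (-δ * ξ)) := by
        rw [norm_mul, norm_cexp_neg_mul_ofReal]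
        exact mul_le_mul_of_nonneg_left (hg ξ hξ) (Real.exp_pos _).le
    _ = C * Real.exp (-(s.re + δ) * ξ) := by
        rw [mul_left_comm, ← Real.exp_add]
        ring_nf

lemma integrableOn_cexp_neg_mul_of_exp_bound (hgc : ContinuousOn g (Ici 0))
    (hg : ∀ ξ : ℝ, 0 ≤ ξ → ‖g ξ‖ ≤ C * Real.exp (-δ * ξ)) (hs : -δ < s.re) :
    IntegrableOn (fun ξ : ℝ => cexp (-s * ξ) * g ξ) (Ioi 0) := by
  have hcont : ContinuousOn (fun ξ : ℝ => cexp (-s * ξ) * g ξ) (Ioi 0) :=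
    ((by fun_prop : Continuous fun ξ : ℝ => cexp (-s * ξ)).continuousOn.mul hgc).mono
      Ioi_subset_Ici_self
  refine ((exp_neg_integrableOn_Ioi 0 (by linarith : 0 < s.re + δ)).const_mul C).mono'
    (hcont.aestronglyMeasurable measurableSet_Ioi) ?_
  filter_upwards [ae_restrict_mem measurableSet_Ioi] with ξ hξ
  exact norm_cexp_neg_mul_le_of_exp_bound hg (le_of_lt hξ)

lemma tendsto_cexp_neg_mul_of_exp_bound_atTop
    (hg : ∀ ξ : ℝ, 0 ≤ ξ → ‖g ξ‖ ≤ C * Real.exp (-δ * ξ)) (hs : -δ < s.re) :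
    Tendsto (fun ξ : ℝ => cexp (-s * ξ) * g ξ) atTop (𝓝 0) := by
  have hdecay : Tendsto (fun ξ : ℝ => C * Real.exp (-(s.re + δ) * ξ)) atTop (𝓝 0) := by
    simpa using ((Real.tendsto_exp_atBot.comp
      (tendsto_id.const_mul_atTop_of_neg (by linarith : -(s.re + δ) < 0))).const_mul C)
  refine squeeze_zero_norm' ?_ hdecay
  filter_upwards [eventually_ge_atTop 0] with ξ hξ
  exact norm_cexp_neg_mul_le_of_exp_bound hg hξ

end ExponentialBound

theorem laplaceTransform_derivWithin {f : ℝ → ℂ} {C δ : ℝ} {s : ℂ}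
    (hf : ContDiffOn ℝ 1 f (Ici 0))
    (hbf : ∀ ξ : ℝ, 0 ≤ ξ → ‖f ξ‖ ≤ C * Real.exp (-δ * ξ))
    (hbf' : ∀ ξ : ℝ, 0 ≤ ξ → ‖derivWithin f (Ici 0) ξ‖ ≤ C * Real.exp (-δ * ξ))
    (hs : -δ < s.re) :
    laplaceTransform (derivWithin f (Ici 0)) s = s * laplaceTransform f s - f 0 := by
  have hfc : ContinuousOn f (Ici 0) := hf.continuousOn
  have hu : ∀ x ∈ Ioi (0 : ℝ),
      HasDerivAt (fun ξ : ℝ => cexp (-s * ξ)) (-s * cexp (-s * x)) x := fun x _ => by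
    simpa [mul_comm] using (((hasDerivAt_id (x : ℂ)).const_mul (-s)).cexp).comp_ofReal
  have hv : ∀ x ∈ Ioi (0 : ℝ), HasDerivAt f (derivWithin f (Ici 0) x) x := fun x hx =>
    ((hf.differentiableOn one_ne_zero) x (mem_Ici.2 (le_of_lt hx))).hasDerivWithinAt.hasDerivAt
      (Ici_mem_nhds hx)
  have huv' := integrableOn_cexp_neg_mul_of_exp_bound
    (hf.continuousOn_derivWithin (uniqueDiffOn_Ici 0) le_rfl) hbf' hs
  have hu'v : IntegrableOn (fun ξ : ℝ => -s * cexp (-s * ξ) * f ξ) (Ioi 0) := by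
    simp only [mul_assoc]
    exact (integrableOn_cexp_neg_mul_of_exp_bound hfc hbf hs).const_mul (-s)
  have h_zero : Tendsto (fun ξ : ℝ => cexp (-s * ξ) * f ξ) (𝓝[>] 0) (𝓝 (f 0)) := by
    have hexp : Tendsto (fun ξ : ℝ => cexp (-s * ξ)) (𝓝[>] 0) (𝓝 1) := by
      simpa using ((by fun_prop : Continuous fun ξ : ℝ => cexp (-s * ξ)).tendsto 0).mono_left
        nhdsWithin_le_nhds
    simpa using hexp.mul ((hfc 0 self_mem_Ici).mono_left (nhdsWithin_mono _ Ioi_subset_Ici_self))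
  have hparts := integral_Ioi_mul_deriv_eq_deriv_mul hu hv huv' hu'v h_zero
    (tendsto_cexp_neg_mul_of_exp_bound_atTop hbf hs)
  simp only [mul_assoc, integral_const_mul] at hparts
  rw [laplaceTransform, hparts, laplaceTransform]
  ring

theorem moebius_laplace_of_derivative_general
    (δ : ℝ) (s₀ : ℂ) (f : ℝ → ℂ) (C : ℝ)
    (hf : ContDiffOn ℝ 1 f (Ici 0))
    (hbf : ∀ ξ : ℝ, 0 ≤ ξ → ‖f ξ‖ ≤ C * Real.exp (-δ * ξ))
    (hbf' : ∀ ξ : ℝ, 0 ≤ ξ → ‖derivWithin f (Ici 0) ξ‖ ≤ C * Real.exp (-δ * ξ)) :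
    ∀ z : ℂ, ‖z‖ < 1 → z ≠ 1 → -δ < (s₀ * (z + 1) / (z - 1)).re →
      (∫ ξ in Ioi (0 : ℝ),
          Complex.exp (-(s₀ * (z + 1) / (z - 1)) * ξ) * derivWithin f (Ici 0) ξ) / (z - 1) =
        (1 / 2) * (f 0 + (z + 1) *
          ((2 * s₀ *
            ((∫ ξ in Ioi (0 : ℝ),
                Complex.exp (-(s₀ * (z + 1) / (z - 1)) * ξ) * f ξ) / (z - 1)) - f 0)
            / (z - 1))) := by
  intro z _ hz1 hre
  have hz1' : z - 1 ≠ 0 := sub_ne_zero.mpr hz1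
  change laplaceTransform (derivWithin f (Ici 0)) _ / (z - 1) =
    1 / 2 * (f 0 + (z + 1) * ((2 * s₀ * (laplaceTransform f _ / (z - 1)) - f 0) / (z - 1)))
  rw [laplaceTransform_derivWithin hf hbf hbf' hre]
  field_simp
  ring

/-- The operator `𝒯₊`: with `(𝓜𝓛f)(z) = (Lf)(s₀(z+1)/(z−1))/(z−1)` and
`F(z) = (2s₀(𝓜𝓛f)(z) − f(0))/(z−1)`, the Möbius-transformed Laplace transform of the
derivative satisfies `(𝓜𝓛f′)(z) = (1/2)(f(0) + (z+1)F(z))`. -/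
theorem moebius_laplace_of_derivative
    (δ : ℝ) (hδ : 0 < δ) (s₀ : ℂ) (hs₀ : s₀ ≠ 0) (f : ℝ → ℂ) (C : ℝ)
    (hf : ContDiffOn ℝ 1 f (Ici 0))
    (hbf : ∀ ξ : ℝ, 0 ≤ ξ → ‖f ξ‖ ≤ C * Real.exp (-δ * ξ))
    (hbf' : ∀ ξ : ℝ, 0 ≤ ξ → ‖derivWithin f (Ici 0) ξ‖ ≤ C * Real.exp (-δ * ξ)) :
    ∀ z : ℂ, ‖z‖ < 1 → z ≠ 1 → -δ < (s₀ * (z + 1) / (z - 1)).re →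
      (∫ ξ in Ioi (0 : ℝ),
          Complex.exp (-(s₀ * (z + 1) / (z - 1)) * ξ) * derivWithin f (Ici 0) ξ) / (z - 1) =
        (1 / 2) * (f 0 + (z + 1) *
          ((2 * s₀ *
            ((∫ ξ in Ioi (0 : ℝ),
                Complex.exp (-(s₀ * (z + 1) / (z - 1)) * ξ) * f ξ) / (z - 1)) - f 0)
            / (z - 1))) :=
  moebius_laplace_of_derivative_general δ s₀ f C hf hbf hbf'
end

section
/- Let s₀, a ∈ ℂ with s₀ ≠ 0 and a ≠ s₀. For z in the open unit disc with s₀(z+1)/(z−1) ≠ a, the Möbius-transformed Laplace transform of the exponential mode ξ ↦ e^{aξ}, namely (𝓜𝓛(e^{a·}))(z) = (1/( s₀(z+1)/(z−1) − a ))·(1/(z−1)), equals 1/((s₀ − a)·z + (s₀ + a)); its unique pole is at z_a = (a + s₀)/(a − s₀), and |z_a| < 1 holds if and only if Re(a/s₀) < 0. Consequently, z ↦ 1/((s₀ − a)z + (s₀ + a)) is holomorphic on the open unit disc if and only if Re(a/s₀) ≥ 0. -/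
/-!
Multiplying through by `z - 1` turns the transform into `1 / ((s₀ - a) z + (s₀ + a))`. Its pole
`z_a` lies in the unit disc iff `‖a + s₀‖ < ‖a - s₀‖`, i.e. iff `Re (a · conj s₀) < 0`, and this
real number has the sign of `Re (a / s₀)`. Finally `1 / (c z + d)` is holomorphic on an open set
exactly when the set avoids the pole.
-/

open Complex Metric ComplexConjugate

theorem one_div_mobius_sub_mul_one_div {K : Type*} [Field K] {s₀ a z : K} (hz : z ≠ 1) :
    1 / (s₀ * (z + 1) / (z - 1) - a) * (1 / (z - 1)) = 1 / ((s₀ - a) * z + (s₀ + a)) := by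
  have hz₁ : z - 1 ≠ 0 := sub_ne_zero.mpr hz
  have hsub : s₀ * (z + 1) / (z - 1) - a = ((s₀ - a) * z + (s₀ + a)) / (z - 1) := by
    field_simp
    ring
  rw [hsub, one_div_div, div_mul_div_comm, mul_one, mul_comm, div_mul_cancel_left₀ hz₁, one_div]

theorem mul_add_eq_zero_iff_eq_neg_div {K : Type*} [Field K] {c d z : K} (hc : c ≠ 0) :
    c * z + d = 0 ↔ z = -d / c := by
  rw [eq_div_iff hc, add_eq_zero_iff_eq_neg, mul_comm]

theorem Complex.norm_add_lt_norm_sub_iff (a b : ℂ) :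
    ‖a + b‖ < ‖a - b‖ ↔ (a * conj b).re < 0 := by
  rw [norm_def, norm_def, Real.sqrt_lt_sqrt_iff (normSq_nonneg _), normSq_add, normSq_sub]
  constructor <;> intro h <;> linarith

theorem Complex.re_div_neg_iff (a b : ℂ) : (a / b).re < 0 ↔ (a * conj b).re < 0 := by
  rcases eq_or_ne b 0 with rfl | hb
  · simp
  rw [div_eq_mul_inv, inv_def, ← mul_assoc, re_mul_ofReal]
  simpa only [zero_mul] using mul_lt_mul_iff_left₀ (c := 0) (inv_pos.mpr (normSq_pos.mpr hb))

theorem differentiableOn_one_div_mul_add_iff {𝕜 : Type*} [NontriviallyNormedField 𝕜]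
    {U : Set 𝕜} (hU : IsOpen U) {c d : 𝕜} (hc : c ≠ 0) :
    DifferentiableOn 𝕜 (fun z => 1 / (c * z + d)) U ↔ -d / c ∉ U := by
  constructor
  · intro hdiff hpole
    have hcont : ContinuousAt (fun z => 1 / (c * z + d)) (-d / c) :=
      (hdiff.differentiableAt (hU.mem_nhds hpole)).continuousAt
    -- `z ↦ 1 / (c * z + d)` is `Inv.inv` composed with an affine bijection taking `-d / c` to `0`
    have hinv : ContinuousAt (fun w : 𝕜 => 1 / (c * ((w - d) / c) + d)) 0 :=
      ContinuousAt.comp (g := fun z => 1 / (c * z + d)) (by simpa using hcont) (by fun_prop)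
    simp only [mul_div_cancel₀ _ hc, sub_add_cancel, one_div] at hinv
    exact NormedField.continuousAt_inv.mp hinv rfl
  · intro hpole z hz
    have hne : c * z + d ≠ 0 := fun h => hpole ((mul_add_eq_zero_iff_eq_neg_div hc).mp h ▸ hz)
    exact ((differentiableAt_const 1).div (by fun_prop : DifferentiableAt 𝕜 (fun z => c * z + d) z)
      hne).differentiableWithinAt

theorem pole_condition_exponential_mode_general
    (s₀ a : ℂ) (ha : a ≠ s₀) :
    (∀ z : ℂ, ‖z‖ < 1 → s₀ * (z + 1) / (z - 1) ≠ a →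
      1 / (s₀ * (z + 1) / (z - 1) - a) * (1 / (z - 1)) =
        1 / ((s₀ - a) * z + (s₀ + a))) ∧
    (∀ z : ℂ, (s₀ - a) * z + (s₀ + a) = 0 ↔ z = (a + s₀) / (a - s₀)) ∧
    (‖(a + s₀) / (a - s₀)‖ < 1 ↔ (a / s₀).re < 0) ∧
    (DifferentiableOn ℂ (fun z : ℂ => 1 / ((s₀ - a) * z + (s₀ + a)))
        (ball (0 : ℂ) 1) ↔ 0 ≤ (a / s₀).re) := by
  have hsa : s₀ - a ≠ 0 := sub_ne_zero.mpr ha.symm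
  have hpole : -(s₀ + a) / (s₀ - a) = (a + s₀) / (a - s₀) := by
    rw [← neg_sub a s₀, neg_div_neg_eq, add_comm]
  have hinside : ‖(a + s₀) / (a - s₀)‖ < 1 ↔ (a / s₀).re < 0 := by
    rw [norm_div, div_lt_one (norm_pos_iff.mpr (sub_ne_zero.mpr ha)),
      norm_add_lt_norm_sub_iff, re_div_neg_iff]
  refine ⟨fun z hz _ => one_div_mobius_sub_mul_one_div ?_,
    fun z => hpole ▸ mul_add_eq_zero_iff_eq_neg_div hsa, hinside, ?_⟩
  · rintro rfl
    simp at hz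
  · rw [differentiableOn_one_div_mul_add_iff isOpen_ball hsa, hpole, mem_ball_zero_iff,
      hinside, not_lt]

/-- Pole condition for the exponential mode `ξ ↦ e^{aξ}`: its Möbius-transformed Laplace
transform equals `1/((s₀−a)z + (s₀+a))`, whose unique pole `z_a = (a+s₀)/(a−s₀)` lies in
the open unit disc iff `Re(a/s₀) < 0`; consequently it is holomorphic on the disc iff
`Re(a/s₀) ≥ 0`. -/
theorem pole_condition_exponential_mode
    (s₀ a : ℂ) (hs₀ : s₀ ≠ 0) (ha : a ≠ s₀) :
    (∀ z : ℂ, ‖z‖ < 1 → s₀ * (z + 1) / (z - 1) ≠ a →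
      1 / (s₀ * (z + 1) / (z - 1) - a) * (1 / (z - 1)) =
        1 / ((s₀ - a) * z + (s₀ + a))) ∧
    (∀ z : ℂ, (s₀ - a) * z + (s₀ + a) = 0 ↔ z = (a + s₀) / (a - s₀)) ∧
    (‖(a + s₀) / (a - s₀)‖ < 1 ↔ (a / s₀).re < 0) ∧
    (DifferentiableOn ℂ (fun z : ℂ => 1 / ((s₀ - a) * z + (s₀ + a)))
        (ball (0 : ℂ) 1) ↔ 0 ≤ (a / s₀).re) :=
  pole_condition_exponential_mode_general s₀ a ha
end
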